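/- Let X and Y be complex Banach spaces, A ∈ B(X), B ∈ B(Y), C ∈ B(Y, X), and let M_C ∈ B(X ⊕ Y) be the upper-triangular operator matrix M_C(x, y) = (Ax + Cy, By). If A is invertible in B(X), then M_C has finite ascent if and only if B has finite ascent. -/

import Mathlib

noncomputable section

open ContinuousLinearMap Metric Set

variable {E : Type*} [NormedAddCommGroup E] [NormedSpace ℂ E]
variable {X Y : Type*} [NormedAddCommGroup X] [NormedSpace ℂ X] [CompleteSpace X]
  [NormedAddCommGroup Y] [NormedSpace ℂ Y] [CompleteSpace Y]

/-- `T` has finite ascent: some power has the same kernel as the next one. -/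
def HasFiniteAscent (T : E →L[ℂ] E) : Prop :=
  ∃ k : ℕ, LinearMap.ker ((T ^ k : E →L[ℂ] E) : E →ₗ[ℂ] E) = LinearMap.ker ((T ^ (k + 1) : E →L[ℂ] E) : E →ₗ[ℂ] E)

/-- The upper-triangular operator matrix `M_C (x, y) = (A x + C y, B y)` on `X ⊕ Y`. -/
def ucMat (A : X →L[ℂ] X) (B : Y →L[ℂ] Y) (C : Y →L[ℂ] X) :
    (X × Y) →L[ℂ] (X × Y) :=
  (A.comp (ContinuousLinearMap.fst ℂ X Y) + C.comp (ContinuousLinearMap.snd ℂ X Y)).prod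
    (B.comp (ContinuousLinearMap.snd ℂ X Y))

/-!
Since `A` is invertible, the projection `(x, y) ↦ y` maps `ker M_C^n` onto `ker B^n` (a preimage of
`y` is corrected in the first coordinate using surjectivity of `A^n`) and is injective on it (since
`M_C^n (x, 0) = (A^n x, 0)`). These identifications are compatible with the inclusions
`ker M_C^m ≤ ker M_C^n`, so the kernel chains of `M_C` and `B` stabilize at the same index.
-/

open LinearMap in
theorem Submodule.eq_of_le_of_disjoint_ker_of_map_le {R M N : Type*} [Ring R]
    [AddCommGroup M] [Module R M] [AddCommGroup N] [Module R N] (f : M →ₗ[R] N)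
    {p q : Submodule R M} (hpq : p ≤ q) (hq : Disjoint q (ker f)) (h : q.map f ≤ p.map f) :
    p = q := by
  refine le_antisymm hpq ?_
  calc q ≤ (p ⊔ ker f) ⊓ q := le_inf ((LinearMap.map_le_map_iff f).1 h) le_rfl
    _ = p ⊔ ker f ⊓ q := sup_inf_assoc_of_le _ hpq
    _ = p := by rw [hq.symm.eq_bot, sup_bot_eq]

namespace LinearMap

variable {R M N : Type*} [Ring R] [AddCommGroup M] [Module R M] [AddCommGroup N] [Module R N]

/-- `T` has the block form `[[a, *], [0, b]]` with respect to `M × N`. -/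
def IsBlockUpperTriangular (T : Module.End R (M × N)) (a : Module.End R M)
    (b : Module.End R N) : Prop :=
  T ∘ₗ inl R M N = inl R M N ∘ₗ a ∧ snd R M N ∘ₗ T = b ∘ₗ snd R M N

namespace IsBlockUpperTriangular

variable {T : Module.End R (M × N)} {a : Module.End R M} {b : Module.End R N}

theorem apply_inl (h : IsBlockUpperTriangular T a b) (x : M) : T (x, 0) = (a x, 0) :=
  LinearMap.congr_fun h.1 x

theorem snd_apply (h : IsBlockUpperTriangular T a b) (z : M × N) : (T z).2 = b z.2 :=
  LinearMap.congr_fun h.2 z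

theorem mul {T' : Module.End R (M × N)} {a' : Module.End R M} {b' : Module.End R N}
    (h : IsBlockUpperTriangular T a b) (h' : IsBlockUpperTriangular T' a' b') :
    IsBlockUpperTriangular (T * T') (a * a') (b * b') := by
  constructor <;> ext z <;> simp [h.apply_inl, h'.apply_inl, h.snd_apply, h'.snd_apply]

theorem pow (h : IsBlockUpperTriangular T a b) (n : ℕ) :
    IsBlockUpperTriangular (T ^ n) (a ^ n) (b ^ n) := by
  induction n with
  | zero => constructor <;> rfl
  | succ n ih => simpa only [pow_succ] using ih.mul h

theorem map_snd_ker (h : IsBlockUpperTriangular T a b) (ha : Function.Surjective a) :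
    (ker T).map (snd R M N) = ker b := by
  ext y
  constructor
  · rintro ⟨z, hz, rfl⟩
    show b z.2 = 0
    rw [← h.snd_apply, (mem_ker.1 hz : T z = 0), Prod.snd_zero]
  · intro hy
    -- `T (0, y)` lies in `M × 0`, so it can be cancelled by `T (x, 0) = (a x, 0)`
    obtain ⟨x, hx⟩ := ha (-(T (0, y)).1)
    have hTy : (T (0, y)).2 = 0 := by rw [h.snd_apply]; exact hy
    refine ⟨(x, y), ?_, rfl⟩
    have hsplit : ((x, y) : M × N) = (x, 0) + (0, y) := by simp
    rw [SetLike.mem_coe, mem_ker, hsplit, map_add, h.apply_inl, hx]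
    ext <;> simp [hTy]

theorem disjoint_ker_ker_snd (h : IsBlockUpperTriangular T a b) (ha : Function.Injective a) :
    Disjoint (ker T) (ker (snd R M N)) := by
  rw [disjoint_iff_inf_le]
  rintro ⟨x, y⟩ ⟨hT, hy : y = 0⟩
  subst hy
  have hx : a x = 0 := congrArg Prod.fst ((h.apply_inl x).symm.trans hT)
  simp [ha (hx.trans a.map_zero.symm)]

theorem ker_pow_eq_ker_pow_iff (h : IsBlockUpperTriangular T a b) (ha : Function.Bijective a)
    {m n : ℕ} (hmn : m ≤ n) : ker (T ^ m) = ker (T ^ n) ↔ ker (b ^ m) = ker (b ^ n) := by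
  have han : ∀ k, Function.Bijective ⇑(a ^ k) := fun k => by
    rw [Module.End.coe_pow]; exact ha.iterate k
  have hmap : ∀ k, (ker (T ^ k)).map (snd R M N) = ker (b ^ k) := fun k =>
    (h.pow k).map_snd_ker (han k).2
  constructor
  · intro hT
    rw [← hmap, ← hmap, hT]
  · intro hb
    have hle : ker (T ^ m) ≤ ker (T ^ n) := by
      rw [← pow_sub_mul_pow T hmn, Module.End.mul_eq_comp]
      exact ker_le_ker_comp _ _
    exact Submodule.eq_of_le_of_disjoint_ker_of_map_le _ hle
      ((h.pow n).disjoint_ker_ker_snd (han n).1) (by rw [hmap, hmap, hb])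

end IsBlockUpperTriangular

end LinearMap

omit [CompleteSpace X] [CompleteSpace Y] in
open LinearMap in
theorem isBlockUpperTriangular_ucMat (A : X →L[ℂ] X) (B : Y →L[ℂ] Y) (C : Y →L[ℂ] X) :
    IsBlockUpperTriangular (ucMat A B C : Module.End ℂ (X × Y)) A B := by
  constructor <;> ext <;> simp [ucMat]

theorem stmt2 (A : X →L[ℂ] X) (B : Y →L[ℂ] Y) (C : Y →L[ℂ] X) (hA : IsUnit A) :
    HasFiniteAscent (ucMat A B C) ↔ HasFiniteAscent B := by
  have hA' : Function.Bijective A := ContinuousLinearMap.isUnit_iff_bijective.mp hA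
  simp only [HasFiniteAscent, ContinuousLinearMap.toLinearMap_pow]
  exact exists_congr fun k =>
    (isBlockUpperTriangular_ucMat A B C).ker_pow_eq_ker_pow_iff hA' k.le_succ
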